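/- arXiv:1607.06870 — 2 statements merged into one kernel-verified Lean document; each statement's English description precedes it below -/
import Mathlib

section
/- Let 1 < p, q < ∞ and let u, v be weights with v > 0 almost everywhere and (u,v) ∈ Fourier(p,q). Set w = v^{−p'/p}. Then there is a constant C such that for every bounded measurable set E ⊆ ℝⁿ, every μ ∈ ℝⁿ with −μ ∈ E, and every τ ∈ ℝⁿ: u((E+μ)° + τ)^{1/q} · w(E)^{1/p'} ≤ C and u(E)^{1/q} · w((E+μ)° + τ)^{1/p'} ≤ C. -/
open MeasureTheory ENNReal Set Bornology Pointwise

noncomputable section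

abbrev Euc (n : ℕ) := EuclideanSpace ℝ (Fin n)

/-- The Fourier transform `f̂(z) = ∫ f(x) e^{-i x·z} dx`. -/
def ftrans {n : ℕ} (f : Euc n → ℂ) (z : Euc n) : ℂ :=
  ∫ x : Euc n, f x * Complex.exp (-(Complex.I * ((inner ℝ x z : ℝ) : ℂ)))

/-- A weight: nonnegative, measurable, locally integrable. -/
def IsWeight {n : ℕ} (u : Euc n → ℝ) : Prop :=
  Measurable u ∧ (∀ x, 0 ≤ u x) ∧ LocallyIntegrable u volume

/-- `u(A) = ∫_A u`, as a value in `ℝ≥0∞`. -/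
def wMeas {n : ℕ} (u : Euc n → ℝ) (A : Set (Euc n)) : ℝ≥0∞ :=
  ∫⁻ x in A, ENNReal.ofReal (u x)

/-- The polarSet of a set: `E° = {z : |x·z| ≤ 1 for all x ∈ E}`. -/
def polarSet {n : ℕ} (E : Set (Euc n)) : Set (Euc n) :=
  {z | ∀ x ∈ E, |(inner ℝ x z : ℝ)| ≤ 1}

/-- The setTranslate `E + τ` of a set. -/
def setTranslate {n : ℕ} (τ : Euc n) (E : Set (Euc n)) : Set (Euc n) :=
  (fun x => x + τ) '' E

/-- Conjugate exponent `p' = p/(p-1)`. -/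
def rconj (p : ℝ) : ℝ := p / (p - 1)

/-- The weight `w = v^{-p'/p}`. -/
def wFun {n : ℕ} (p : ℝ) (v : Euc n → ℝ) : Euc n → ℝ :=
  fun x => v x ^ (-(rconj p) / p)

/-- The weighted Fourier inequality class `Fourier(p,q)`. -/
def FourierPQ {n : ℕ} (p q : ℝ) (u v : Euc n → ℝ) : Prop :=
  ∃ C : ℝ, 0 < C ∧ ∀ f : Euc n → ℂ, Integrable f →
    (∫⁻ z, (‖ftrans f z‖₊ : ℝ≥0∞) ^ q * ENNReal.ofReal (u z)) ^ (1/q) ≤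
      ENNReal.ofReal C * (∫⁻ x, (‖f x‖₊ : ℝ≥0∞) ^ p * ENNReal.ofReal (v x)) ^ (1/p)

/-- Axis-parallel cube with center `c` and half-side `r`. -/
def axisCube {n : ℕ} (c : Euc n) (r : ℝ) : Set (Euc n) :=
  {x | ∀ i, |x i - c i| ≤ r}

/-- An axis-parallel cube. -/
def IsCube {n : ℕ} (Q : Set (Euc n)) : Prop :=
  ∃ (c : Euc n) (r : ℝ), 0 < r ∧ Q = axisCube c r

/-- Comparability of measures: `(μ₁,μ₂) ∈ C(δ)`. -/
def Compar {n : ℕ} (μ₁ μ₂ : Measure (Euc n)) (δ : ℝ) : Prop :=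
  ∃ C : ℝ, 0 < C ∧ ∀ Q : Set (Euc n), IsCube Q → ∀ E ⊆ Q, MeasurableSet E →
    μ₁ E * μ₂ Q ^ δ ≤ ENNReal.ofReal C * (μ₁ Q * μ₂ E ^ δ)

/-- A doubling measure. -/
def Doubling {n : ℕ} (μ : Measure (Euc n)) : Prop :=
  ∃ C : ℝ, 0 < C ∧ ∀ (c : Euc n) (r : ℝ), 0 < r →
    μ (axisCube c (2 * r)) ≤ ENNReal.ofReal C * μ (axisCube c r)

/-- `(u, |·|) ∈ C(δ)`. -/
def ComparWL {n : ℕ} (u : Euc n → ℝ) (δ : ℝ) : Prop :=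
  ∃ C : ℝ, 0 < C ∧ ∀ Q : Set (Euc n), IsCube Q → ∀ E ⊆ Q, MeasurableSet E →
    wMeas u E * volume Q ^ δ ≤ ENNReal.ofReal C * (wMeas u Q * volume E ^ δ)

/-- `(|·|, v) ∈ C(δ)`. -/
def ComparLW {n : ℕ} (v : Euc n → ℝ) (δ : ℝ) : Prop :=
  ∃ C : ℝ, 0 < C ∧ ∀ Q : Set (Euc n), IsCube Q → ∀ E ⊆ Q, MeasurableSet E →
    volume E * wMeas v Q ^ δ ≤ ENNReal.ofReal C * (volume Q * wMeas v E ^ δ)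

/-- The class `N_Q(p,q)`. -/
def NQ {n : ℕ} (p q : ℝ) (u v : Euc n → ℝ) : Prop :=
  ∃ C : ℝ, 0 < C ∧ ∀ Q : Set (Euc n), IsCube Q → ∀ μ : Euc n, -μ ∈ Q → ∀ τ : Euc n,
    wMeas u Q ^ (1/q) * wMeas (wFun p v) (setTranslate τ (polarSet (setTranslate μ Q))) ^ (1 / rconj p)
        ≤ ENNReal.ofReal C ∧
    wMeas u (setTranslate τ (polarSet (setTranslate μ Q))) ^ (1/q) * wMeas (wFun p v) Q ^ (1 / rconj p)
        ≤ ENNReal.ofReal C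

/-- The class `N_{Q'}(p,q)`. -/
def NQ' {n : ℕ} (p q : ℝ) (u v : Euc n → ℝ) : Prop :=
  ∃ C : ℝ, 0 < C ∧ ∀ Q : Set (Euc n), IsCube Q → ∀ μ : Euc n, -μ ∈ Q → ∀ τ : Euc n,
    wMeas u Q ^ (1/q) * volume (polarSet Q)
        ≤ ENNReal.ofReal C * wMeas v (setTranslate τ (polarSet (setTranslate μ Q))) ^ (1/p) ∧
    wMeas u (setTranslate τ (polarSet (setTranslate μ Q))) ^ (1/q) * volume Q
        ≤ ENNReal.ofReal C * wMeas v Q ^ (1/p)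

/-- A rectanguloid centered at the origin. -/
def IsRectanguloid0 {n : ℕ} (R : Set (Euc n)) : Prop :=
  ∃ (b : OrthonormalBasis (Fin n) ℝ (Euc n)) (a : Fin n → ℝ),
    (∀ i, 0 < a i) ∧ R = {x | ∀ i, |(inner ℝ x (b i) : ℝ)| ≤ a i}

/-- An ellipsoid centered at the origin. -/
def IsEllipsoid0 {n : ℕ} (S : Set (Euc n)) : Prop :=
  ∃ T : Euc n ≃ₗ[ℝ] Euc n, S = ⇑T '' Metric.closedBall 0 1

/-!
Test the Fourier inequality on `f = 1_A · w · e^{i x·ζ}` with `w = v^{-p'/p}`. Since `w^p v = w`,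
its right-hand side is `C w(A)^{1/p}`. If on `A` each frequency `z ∈ B` agrees with `ζ` up to a
phase `x·(z-ζ)` that stays within `1` of a constant, then `|f̂(z)| ≥ cos 1 · w(A)` on `B`, so the
left-hand side is at least `cos 1 · w(A) u(B)^{1/q}`. Dividing by `w(A)^{1/p}` gives
`u(B)^{1/q} w(A)^{1/p'} ≤ C / cos 1`, first when `w(A) < ∞` and then in general by exhausting `A`
by sets of finite `w`-measure. For `x ∈ E` and `s ∈ (E+μ)°` we have `|(x+μ)·s| ≤ 1`, which gives
the phase condition both for `(A, B) = (E, (E+μ)°+τ)` with `ζ = τ` and for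
`(A, B) = ((E+μ)°+τ, E)` with `ζ = -μ`.
-/

theorem ENNReal.mul_rpow_le_of_mul_le_mul_rpow {a c W : ℝ≥0∞} {r s : ℝ} (hs : 0 < s)
    (hrs : r + s = 1) (hW : W ≠ ∞) (h : a * W ≤ c * W ^ r) : a * W ^ s ≤ c := by
  rcases eq_or_ne W 0 with rfl | hW₀
  · simp [ENNReal.zero_rpow_of_pos hs]
  have hWr₀ : W ^ r ≠ 0 := by simp [ENNReal.rpow_eq_zero_iff, hW₀, hW]
  have hWr : W ^ r ≠ ∞ := by simp [ENNReal.rpow_eq_top_iff, hW₀, hW]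
  rw [← ENNReal.mul_le_mul_iff_left hWr₀ hWr]
  calc a * W ^ s * W ^ r = a * W := by
        rw [mul_assoc, ← ENNReal.rpow_add _ _ hW₀ hW, add_comm, hrs, ENNReal.rpow_one]
    _ ≤ c * W ^ r := h

theorem ENNReal.iSup_rpow {ι : Sort*} (f : ι → ℝ≥0∞) {r : ℝ} (hr : 0 < r) :
    (⨆ i, f i) ^ r = ⨆ i, f i ^ r :=
  Monotone.map_iSup_of_continuousAt (f := fun x : ℝ≥0∞ => x ^ r)
    (ENNReal.continuous_rpow_const.continuousAt) (ENNReal.monotone_rpow_of_nonneg hr.le)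
    (ENNReal.zero_rpow_of_pos hr)

theorem MeasureTheory.mul_measure_rpow_le_of_forall_ne_top {α : Type*} [MeasurableSpace α]
    {ν : Measure α} [SigmaFinite ν] {A : Set α} (hA : MeasurableSet A) {b c : ℝ≥0∞} {r : ℝ}
    (hr : 0 < r) (h : ∀ A' ⊆ A, MeasurableSet A' → ν A' ≠ ∞ → b * ν A' ^ r ≤ c) :
    b * ν A ^ r ≤ c := by
  have hA_eq : A = ⋃ k, A ∩ spanningSets ν k := by
    rw [← inter_iUnion, iUnion_spanningSets, inter_univ]
  have hmono : Monotone fun k => A ∩ spanningSets ν k :=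
    fun _ _ hkl => inter_subset_inter_right _ (monotone_spanningSets ν hkl)
  rw [hA_eq, hmono.measure_iUnion, ENNReal.iSup_rpow _ hr, ENNReal.mul_iSup]
  exact iSup_le fun k => h _ inter_subset_left (hA.inter (measurableSet_spanningSets ν k))
    ((measure_mono inter_subset_right).trans_lt (measure_spanningSets_lt_top ν k)).ne

theorem cos_mul_integral_le_norm_integral_mul_exp {α : Type*} [MeasurableSpace α]
    {μ : Measure α} {w φ : α → ℝ} {θ a : ℝ} (ha : a ≤ Real.pi) (hw : Integrable w μ)
    (hw₀ : 0 ≤ᵐ[μ] w) (hφ : AEStronglyMeasurable φ μ) (hφθ : ∀ᵐ x ∂μ, |φ x - θ| ≤ a) :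
    Real.cos a * ∫ x, w x ∂μ ≤ ‖∫ x, (w x : ℂ) * Complex.exp (φ x * Complex.I) ∂μ‖ := by
  set g : α → ℂ := fun x => (w x : ℂ) * Complex.exp ((φ x - θ : ℝ) * Complex.I)
  have hg_re : ∀ x, (g x).re = w x * Real.cos (φ x - θ) := fun x => by
    simp only [g, Complex.re_ofReal_mul, Complex.exp_ofReal_mul_I_re]
  have hg : Integrable g μ := by
    refine hw.mono' (by fun_prop) ?_
    filter_upwards [hw₀] with x hwx
    rw [norm_mul, Complex.norm_exp_ofReal_mul_I, mul_one, Complex.norm_real,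
      Real.norm_of_nonneg hwx]
  have hcos : ∀ᵐ x ∂μ, w x * Real.cos a ≤ w x * Real.cos (φ x - θ) := by
    filter_upwards [hw₀, hφθ] with x hwx hx
    refine mul_le_mul_of_nonneg_left ?_ hwx
    rw [← Real.cos_abs (φ x - θ)]
    exact Real.cos_le_cos_of_nonneg_of_le_pi (abs_nonneg _) ha hx
  calc Real.cos a * ∫ x, w x ∂μ = ∫ x, w x * Real.cos a ∂μ := by
        rw [integral_mul_const, mul_comm]
    _ ≤ ∫ x, w x * Real.cos (φ x - θ) ∂μ := by
        refine integral_mono_ae (hw.mul_const _) ?_ hcos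
        simpa only [RCLike.re_to_complex, hg_re] using hg.re
    _ = (∫ x, g x ∂μ).re := by simp only [← hg_re]; exact integral_re hg
    _ ≤ ‖∫ x, g x ∂μ‖ := Complex.re_le_norm _
    _ = ‖∫ x, (w x : ℂ) * Complex.exp (φ x * Complex.I) ∂μ‖ := by
        have hg_eq : g = fun x => Complex.exp ((-θ : ℝ) * Complex.I) *
            ((w x : ℂ) * Complex.exp (φ x * Complex.I)) := by
          funext x
          simp only [g, mul_left_comm _ (w x : ℂ), ← Complex.exp_add]
          push_cast; ring_nf
        rw [hg_eq, integral_const_mul, norm_mul, Complex.norm_exp_ofReal_mul_I, one_mul]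

section

variable {n : ℕ}

def modulatedIndicator (A : Set (Euc n)) (w : Euc n → ℝ) (ζ : Euc n) : Euc n → ℂ :=
  A.indicator fun x => (w x : ℂ) * Complex.exp (inner ℝ x ζ * Complex.I)

theorem norm_modulatedIndicator {A : Set (Euc n)} {w : Euc n → ℝ} (hw : ∀ x, 0 ≤ w x)
    (ζ x : Euc n) : ‖modulatedIndicator A w ζ x‖ = A.indicator w x := by
  by_cases hx : x ∈ A
  · rw [modulatedIndicator, indicator_of_mem hx, indicator_of_mem hx, norm_mul,
      Complex.norm_exp_ofReal_mul_I, mul_one, Complex.norm_real, Real.norm_of_nonneg (hw x)]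
  · simp [modulatedIndicator, hx]

theorem integrable_modulatedIndicator {A : Set (Euc n)} (hA : MeasurableSet A)
    {w : Euc n → ℝ} (hw : Measurable w) (hw₀ : ∀ x, 0 ≤ w x) (hwA : IntegrableOn w A)
    (ζ : Euc n) : Integrable (modulatedIndicator A w ζ) := by
  refine (hwA.integrable_indicator hA).mono' ?_
    (ae_of_all _ fun x => (norm_modulatedIndicator hw₀ ζ x).le)
  exact (Measurable.indicator (by fun_prop) hA).aestronglyMeasurable

theorem ftrans_modulatedIndicator {A : Set (Euc n)} (hA : MeasurableSet A) (w : Euc n → ℝ)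
    (ζ z : Euc n) : ftrans (modulatedIndicator A w ζ) z =
      ∫ x in A, (w x : ℂ) * Complex.exp ((-inner ℝ x (z - ζ) : ℝ) * Complex.I) := by
  rw [ftrans, modulatedIndicator, ← integral_indicator hA]
  congr 1
  funext x
  by_cases hx : x ∈ A
  · simp only [indicator_of_mem hx, mul_assoc, ← Complex.exp_add, inner_sub_right]
    push_cast
    ring_nf
  · simp [hx]

def PhaseControlled (A B : Set (Euc n)) (ζ : Euc n) : Prop :=
  ∀ z ∈ B, ∃ θ : ℝ, ∀ x ∈ A, |inner ℝ x (z - ζ) - θ| ≤ 1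

theorem PhaseControlled.mono_left {A A' B : Set (Euc n)} {ζ : Euc n}
    (h : PhaseControlled A B ζ) (hA' : A' ⊆ A) : PhaseControlled A' B ζ := fun z hz =>
  (h z hz).imp fun _ hθ x hx => hθ x (hA' hx)

theorem PhaseControlled.cos_one_mul_integral_le_norm_ftrans {A B : Set (Euc n)} {ζ : Euc n}
    (h : PhaseControlled A B ζ) (hA : MeasurableSet A) {w : Euc n → ℝ} (hw₀ : ∀ x, 0 ≤ w x)
    (hwA : IntegrableOn w A) {z : Euc n} (hz : z ∈ B) :
    Real.cos 1 * ∫ x in A, w x ≤ ‖ftrans (modulatedIndicator A w ζ) z‖ := by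
  obtain ⟨θ, hθ⟩ := h z hz
  rw [ftrans_modulatedIndicator hA]
  refine cos_mul_integral_le_norm_integral_mul_exp (θ := -θ) (by linarith [Real.pi_gt_three])
    hwA (ae_of_all _ hw₀) (by fun_prop) ?_
  filter_upwards [ae_restrict_mem hA] with x hx
  rw [← abs_neg]
  convert hθ x hx using 2
  ring

theorem wFun_rpow_mul_self {p : ℝ} (hp₀ : p ≠ 0) (hp₁ : p ≠ 1) {v : Euc n → ℝ} {x : Euc n}
    (hx : 0 < v x) : wFun p v x ^ p * v x = wFun p v x := by
  have hp₁' : p - 1 ≠ 0 := sub_ne_zero.2 hp₁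
  rw [wFun, ← Real.rpow_mul hx.le, ← Real.rpow_add_one hx.ne', rconj]
  congr 1
  field_simp
  ring

theorem lintegral_modulatedIndicator_wFun {p : ℝ} (hp : 1 < p) {v : Euc n → ℝ}
    (hv₀ : ∀ x, 0 ≤ v x) (hv : ∀ᵐ x, 0 < v x) {A : Set (Euc n)} (hA : MeasurableSet A)
    (ζ : Euc n) :
    ∫⁻ x, (‖modulatedIndicator A (wFun p v) ζ x‖₊ : ℝ≥0∞) ^ p * ENNReal.ofReal (v x) =
      wMeas (wFun p v) A := by
  have hw₀ : ∀ x, 0 ≤ wFun p v x := fun x => Real.rpow_nonneg (hv₀ x) _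
  have hnorm : ∀ x, (‖modulatedIndicator A (wFun p v) ζ x‖₊ : ℝ≥0∞) ^ p * ENNReal.ofReal (v x) =
      A.indicator (fun x => ENNReal.ofReal (wFun p v x ^ p * v x)) x := by
    intro x
    rw [← enorm_eq_nnnorm, ← ofReal_norm, norm_modulatedIndicator hw₀]
    by_cases hx : x ∈ A
    · rw [indicator_of_mem hx, indicator_of_mem hx, ENNReal.ofReal_rpow_of_nonneg (hw₀ x)
        (by linarith), ← ENNReal.ofReal_mul (Real.rpow_nonneg (hw₀ x) p)]
    · simp [hx, ENNReal.zero_rpow_of_pos (by linarith : 0 < p)]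
  simp only [hnorm]
  rw [lintegral_indicator hA, wMeas]
  refine setLIntegral_congr_fun_ae hA ?_
  filter_upwards [hv] with x hx _
  rw [wFun_rpow_mul_self (by linarith) hp.ne' hx]

theorem mul_wMeas_rpow_le_of_forall_le {q : ℝ} (hq : 0 < q) (u : Euc n → ℝ)
    {B : Set (Euc n)} (hB : MeasurableSet B) {g : Euc n → ℝ≥0∞} {c : ℝ≥0∞}
    (h : ∀ z ∈ B, c ≤ g z) :
    c * wMeas u B ^ (1 / q) ≤ (∫⁻ z, g z ^ q * ENNReal.ofReal (u z)) ^ (1 / q) := by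
  have hq' : 0 ≤ 1 / q := by positivity
  have key : c ^ q * wMeas u B ≤ ∫⁻ z, g z ^ q * ENNReal.ofReal (u z) :=
    calc c ^ q * wMeas u B ≤ ∫⁻ z in B, c ^ q * ENNReal.ofReal (u z) :=
          lintegral_const_mul_le _ _
      _ ≤ ∫⁻ z in B, g z ^ q * ENNReal.ofReal (u z) :=
          setLIntegral_mono_ae' hB (ae_of_all _ fun z hz => by gcongr; exact h z hz)
      _ ≤ ∫⁻ z, g z ^ q * ENNReal.ofReal (u z) := setLIntegral_le_lintegral _ _
  calc c * wMeas u B ^ (1 / q) = (c ^ q * wMeas u B) ^ (1 / q) := by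
        rw [ENNReal.mul_rpow_of_nonneg _ _ hq', ← ENNReal.rpow_mul, mul_one_div_cancel hq.ne',
          ENNReal.rpow_one]
    _ ≤ _ := by gcongr

def FourierBound (p q : ℝ) (u v : Euc n → ℝ) (C : ℝ) : Prop :=
  ∀ f : Euc n → ℂ, Integrable f →
    (∫⁻ z, (‖ftrans f z‖₊ : ℝ≥0∞) ^ q * ENNReal.ofReal (u z)) ^ (1/q) ≤
      ENNReal.ofReal C * (∫⁻ x, (‖f x‖₊ : ℝ≥0∞) ^ p * ENNReal.ofReal (v x)) ^ (1/p)

theorem wMeas_eq_withDensity (u : Euc n → ℝ) (A : Set (Euc n)) :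
    wMeas u A = volume.withDensity (fun x => ENNReal.ofReal (u x)) A :=
  (withDensity_apply' _ A).symm

namespace FourierBound

variable {p q C : ℝ} {u v : Euc n → ℝ} {A B : Set (Euc n)} {ζ : Euc n}

theorem wMeas_rpow_mul_wMeas_wFun_rpow_le_of_ne_top (hF : FourierBound p q u v C) (hp : 1 < p)
    (hq : 0 < q) (hv : Measurable v) (hv₀ : ∀ x, 0 ≤ v x) (hvpos : ∀ᵐ x, 0 < v x)
    (hA : MeasurableSet A) (hB : MeasurableSet B) (hAB : PhaseControlled A B ζ)
    (hW : wMeas (wFun p v) A ≠ ∞) :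
    wMeas u B ^ (1/q) * wMeas (wFun p v) A ^ (1 / rconj p) ≤ ENNReal.ofReal (C / Real.cos 1) := by
  set W := wMeas (wFun p v) A
  have hw₀ : ∀ x, 0 ≤ wFun p v x := fun x => Real.rpow_nonneg (hv₀ x) _
  have hwm : Measurable (wFun p v) := hv.pow_const _
  have hwA : IntegrableOn (wFun p v) A :=
    ⟨hwm.aestronglyMeasurable, (hasFiniteIntegral_iff_ofReal (ae_of_all _ hw₀)).2 hW.lt_top⟩
  have hIW : ENNReal.ofReal (∫ x in A, wFun p v x) = W :=
    ofReal_integral_eq_lintegral_ofReal hwA (ae_of_all _ hw₀)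
  have hlow : ∀ z ∈ B, ENNReal.ofReal (Real.cos 1) * W ≤
      ‖ftrans (modulatedIndicator A (wFun p v) ζ) z‖₊ := fun z hz => by
    rw [← hIW, ← ENNReal.ofReal_mul Real.cos_one_pos.le, ← enorm_eq_nnnorm, ← ofReal_norm]
    exact ENNReal.ofReal_le_ofReal (hAB.cos_one_mul_integral_le_norm_ftrans hA hw₀ hwA hz)
  have hmain : ENNReal.ofReal (Real.cos 1) * wMeas u B ^ (1/q) * W ≤
      ENNReal.ofReal C * W ^ (1/p) :=
    calc _ = ENNReal.ofReal (Real.cos 1) * W * wMeas u B ^ (1/q) := by ring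
      _ ≤ _ := mul_wMeas_rpow_le_of_forall_le hq u hB hlow
      _ ≤ _ := hF _ (integrable_modulatedIndicator hA hwm hw₀ hwA ζ)
      _ = _ := by rw [lintegral_modulatedIndicator_wFun hp hv₀ hvpos hA]
  have hconj := Real.HolderConjugate.conjExponent hp
  have hexp : 1 / p + 1 / rconj p = 1 := by
    have := hconj.one_div_add_one_div
    rwa [div_one] at this
  have hcos : ENNReal.ofReal (Real.cos 1) ≠ 0 := by simp [Real.cos_one_pos]
  rw [ENNReal.ofReal_div_of_pos Real.cos_one_pos,
    ENNReal.le_div_iff_mul_le (Or.inl hcos) (Or.inl ENNReal.ofReal_ne_top)]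
  calc _ = ENNReal.ofReal (Real.cos 1) * wMeas u B ^ (1/q) * W ^ (1 / rconj p) := by ring
    _ ≤ _ := ENNReal.mul_rpow_le_of_mul_le_mul_rpow hconj.symm.one_div_pos hexp hW hmain

theorem wMeas_rpow_mul_wMeas_wFun_rpow_le (hF : FourierBound p q u v C) (hp : 1 < p)
    (hq : 0 < q) (hv : Measurable v) (hv₀ : ∀ x, 0 ≤ v x) (hvpos : ∀ᵐ x, 0 < v x)
    (hA : MeasurableSet A) (hB : MeasurableSet B) (hAB : PhaseControlled A B ζ) :
    wMeas u B ^ (1/q) * wMeas (wFun p v) A ^ (1 / rconj p) ≤ ENNReal.ofReal (C / Real.cos 1) := by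
  simp only [wMeas_eq_withDensity (wFun p v)]
  refine mul_measure_rpow_le_of_forall_ne_top hA
    (Real.HolderConjugate.conjExponent hp).symm.one_div_pos fun A' hA'A hA' hfin => ?_
  rw [← wMeas_eq_withDensity] at hfin ⊢
  exact hF.wMeas_rpow_mul_wMeas_wFun_rpow_le_of_ne_top hp hq hv hv₀ hvpos hA' hB
    (hAB.mono_left hA'A) hfin

end FourierBound

theorem isClosed_polarSet (E : Set (Euc n)) : IsClosed (polarSet E) := by
  simp only [polarSet, ofPred_forall]
  exact isClosed_biInter fun x _ => isClosed_le (by fun_prop) continuous_const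

theorem IsClosed.setTranslate {S : Set (Euc n)} (hS : IsClosed S) (τ : Euc n) :
    IsClosed (setTranslate τ S) :=
  (Homeomorph.addRight τ).isClosedMap _ hS

theorem phaseControlled_translate_polarSet_left (E : Set (Euc n)) (μ τ : Euc n) :
    PhaseControlled E (setTranslate τ (polarSet (setTranslate μ E))) τ := by
  rintro _ ⟨s, hs, rfl⟩
  refine ⟨-inner ℝ μ s, fun x hx => ?_⟩
  convert hs (x + μ) ⟨x, hx, rfl⟩ using 2
  rw [add_sub_cancel_right, inner_add_left]
  ring

theorem phaseControlled_translate_polarSet_right (E : Set (Euc n)) (μ τ : Euc n) :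
    PhaseControlled (setTranslate τ (polarSet (setTranslate μ E))) E (-μ) := by
  intro z hz
  refine ⟨inner ℝ τ (z + μ), ?_⟩
  rintro _ ⟨s, hs, rfl⟩
  convert hs (z + μ) ⟨z, hz, rfl⟩ using 2
  rw [sub_neg_eq_add, inner_add_left, real_inner_comm s]
  ring

end

theorem stmt3_general (n : ℕ) (p q : ℝ) (hp : 1 < p) (hq : 1 < q)
    (u v : Euc n → ℝ) (hv : IsWeight v)
    (hvpos : ∀ᵐ x ∂(volume : Measure (Euc n)), 0 < v x)
    (hF : FourierPQ p q u v) :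
    ∃ C : ℝ, 0 < C ∧ ∀ E : Set (Euc n), IsBounded E → MeasurableSet E →
      ∀ μ : Euc n, -μ ∈ E → ∀ τ : Euc n,
      wMeas u (setTranslate τ (polarSet (setTranslate μ E))) ^ (1/q) * wMeas (wFun p v) E ^ (1 / rconj p)
          ≤ ENNReal.ofReal C ∧
      wMeas u E ^ (1/q) * wMeas (wFun p v) (setTranslate τ (polarSet (setTranslate μ E))) ^ (1 / rconj p)
          ≤ ENNReal.ofReal C := by
  obtain ⟨C, hC, hF⟩ := hF
  have hF : FourierBound p q u v C := hF
  refine ⟨C / Real.cos 1, div_pos hC Real.cos_one_pos, fun E _ hE μ _ τ => ?_⟩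
  have hP := ((isClosed_polarSet (setTranslate μ E)).setTranslate τ).measurableSet
  have hq₀ : 0 < q := zero_lt_one.trans hq
  exact ⟨hF.wMeas_rpow_mul_wMeas_wFun_rpow_le hp hq₀ hv.1 hv.2.1 hvpos hE hP
      (phaseControlled_translate_polarSet_left E μ τ),
    hF.wMeas_rpow_mul_wMeas_wFun_rpow_le hp hq₀ hv.1 hv.2.1 hvpos hP hE
      (phaseControlled_translate_polarSet_right E μ τ)⟩

theorem stmt3 (n : ℕ) (hn : 1 ≤ n) (p q : ℝ) (hp : 1 < p) (hq : 1 < q)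
    (u v : Euc n → ℝ) (hu : IsWeight u) (hv : IsWeight v)
    (hvpos : ∀ᵐ x ∂(volume : Measure (Euc n)), 0 < v x)
    (hF : FourierPQ p q u v) :
    ∃ C : ℝ, 0 < C ∧ ∀ E : Set (Euc n), IsBounded E → MeasurableSet E →
      ∀ μ : Euc n, -μ ∈ E → ∀ τ : Euc n,
      wMeas u (setTranslate τ (polarSet (setTranslate μ E))) ^ (1/q) * wMeas (wFun p v) E ^ (1 / rconj p)
          ≤ ENNReal.ofReal C ∧
      wMeas u E ^ (1/q) * wMeas (wFun p v) (setTranslate τ (polarSet (setTranslate μ E))) ^ (1 / rconj p)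
          ≤ ENNReal.ofReal C :=
  stmt3_general n p q hp hq u v hv hvpos hF
end
end

section
/- Let n ≥ 2, let 1 < p, q < ∞, let u, v be weights with v > 0 almost everywhere, and set w = v^{−p'/p}. Suppose there is a constant C such that u(S°)^{1/q} · w(√n S)^{1/p'} ≤ C and u(√n S)^{1/q} · w(S°)^{1/p'} ≤ C for every ellipsoid S centered at the origin. Then there is a constant C' such that u(E°)^{1/q} · w(E)^{1/p'} ≤ C' and u(E)^{1/q} · w(E°)^{1/p'} ≤ C' for every bounded measurable set E ⊆ ℝⁿ with nonempty interior and 0 ∈ E. -/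
open MeasureTheory ENNReal Set Bornology Pointwise

noncomputable section

lemma one_lt_of_sq {x : ℝ} (h0 : 0 < x) (h2 : 1 < x^2) : 1 < x := by nlinarith

lemma lt_of_sq_lt_sq'' {x y : ℝ} (h0 : 0 ≤ x) (h1 : 0 < y) (h2 : x^2 < y^2) : x < y := by
  nlinarith

lemma sq_le_one_of {x : ℝ} (h0 : 0 ≤ x) (h1 : x ≤ 1) : x^2 ≤ 1 := by nlinarith

lemma le_of_sq_le_sq'' {x y : ℝ} (h0 : 0 ≤ x) (h1 : 0 ≤ y) (h2 : x^2 ≤ y^2) : x ≤ y := by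
  nlinarith

lemma lam_lt_aux {a d m : ℝ} (ha : 1 < a) (had : a < d) (hm0 : 0 ≤ m) (hm1 : m ≤ 1) :
    a * d * m < d ^ 2 := by
  have h0 : 0 < d := by linarith
  nlinarith [mul_nonneg (mul_nonneg (by linarith : (0:ℝ) ≤ a) h0.le)
      (by linarith : (0:ℝ) ≤ 1 - m),
    mul_pos (by linarith : (0:ℝ) < d - a) h0]

lemma norm_combo {E : Type*} [NormedAddCommGroup E] [InnerProductSpace ℝ E]
    {e v : E} (he : ‖e‖ = 1) (hev : (inner ℝ e v : ℝ) = 0) (c₁ c₂ : ℝ) :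
    ‖c₁ • e + c₂ • v‖^2 = c₁^2 + c₂^2 * ‖v‖^2 := by
  rw [norm_add_sq_real, real_inner_smul_left, real_inner_smul_right, hev, norm_smul,
    norm_smul, Real.norm_eq_abs, Real.norm_eq_abs, he, mul_one, mul_pow,
    sq_abs, sq_abs]
  ring

lemma case1_ineq {A2 B2 D s2 v2 : ℝ} (hA21 : 1 < A2) (hD1 : 1 < D)
    (hB2eq : B2 * (D - 1) = D - A2) (hB2pos : 0 < B2) (hs20 : 0 ≤ s2)
    (hsq : A2 * D * s2 ≤ 1) (hv20 : 0 ≤ v2) (hv2 : v2 ≤ 1 - s2) :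
    A2 * s2 + B2 * v2 ≤ 1 := by
  have hDs2 : 0 ≤ D * s2 := mul_nonneg (by linarith) hs20
  have h2 : D * s2 ≤ 1 := by nlinarith
  have h1 : B2 * v2 ≤ B2 * (1 - s2) := mul_le_mul_of_nonneg_left hv2 hB2pos.le
  have h3 : 0 ≤ (A2 - 1) * (1 - D * s2) := mul_nonneg (by linarith) (by linarith)
  have h4 : 0 ≤ B2 * s2 := mul_nonneg hB2pos.le hs20
  nlinarith [mul_le_mul_of_nonneg_right h1 (by linarith : (0:ℝ) ≤ D - 1)]

lemma case2_ineq {a d lam B2 m v2 : ℝ} (ha1 : 1 < a) (had : a < d)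
    (hv2 : v2 ≤ 1 - m^2)
    (hB2pos : 0 < B2) (hB2eq : B2 * (d^2 - 1) = d^2 - a^2)
    (hlamEq : lam * (d^2 - 1) = a * d * m - 1) :
    (a * m - lam * d)^2 + B2 * v2 ≤ (1 - lam)^2 := by
  have hd1 : 1 < d := by linarith
  have hd2 : (0:ℝ) < d^2 - 1 := by nlinarith
  have hpos : (0:ℝ) < (d^2 - 1)^2 := by positivity
  have h1 : (a*m - lam*d) * (d^2 - 1) = d - a*m := by linear_combination (-d) * hlamEq
  have h2 : (1 - lam) * (d^2 - 1) = d * (d - a*m) := by linear_combination (-1) * hlamEq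
  have h3 : (d^2 - a^2) * (1 - m^2) ≤ (d - a*m)^2 := by nlinarith [sq_nonneg (a - d*m)]
  have h5 : B2 * v2 * (d^2-1)^2 = (d^2 - a^2) * (d^2 - 1) * v2 := by
    linear_combination (v2 * (d^2-1)) * hB2eq
  have h6 : (d^2 - a^2) * (d^2 - 1) * v2 ≤ (d^2 - a^2) * (d^2 - 1) * (1 - m^2) := by
    apply mul_le_mul_of_nonneg_left hv2
    nlinarith
  have h4 : ((a*m - lam*d)*(d^2-1))^2 + B2*v2*(d^2-1)^2 ≤ ((1 - lam)*(d^2-1))^2 := by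
    rw [h1, h2, h5]
    nlinarith [mul_le_mul_of_nonneg_right h3 (by nlinarith : (0:ℝ) ≤ d^2 - 1)]
  rw [← mul_le_mul_iff_of_pos_right hpos]
  calc ((a*m - lam*d)^2 + B2*v2) * (d^2-1)^2
      = ((a*m - lam*d)*(d^2-1))^2 + B2*v2*(d^2-1)^2 := by ring
    _ ≤ ((1 - lam)*(d^2-1))^2 := h4
    _ = (1-lam)^2 * (d^2-1)^2 := by ring

set_option maxHeartbeats 1000000 in
lemma improve {n : ℕ} (hn : 2 ≤ n) (K : Set (Euc n)) (hK : Convex ℝ K)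
    (hB : Metric.closedBall (0 : Euc n) 1 ⊆ K) {y : Euc n} (hy : y ∈ K) (hy' : -y ∈ K)
    (hd : Real.sqrt n < ‖y‖) :
    ∃ T : Euc n →ₗ[ℝ] Euc n, (∀ z : Euc n, ‖z‖ ≤ 1 → T z ∈ K) ∧
      1 < |LinearMap.det T| := by
  have hn1 : (1:ℝ) ≤ Real.sqrt n := by
    rw [show (1:ℝ) = Real.sqrt 1 by simp]
    exact Real.sqrt_le_sqrt (by exact_mod_cast Nat.one_le_of_lt hn)
  set d : ℝ := ‖y‖ with hdef
  have hd1 : 1 < d := lt_of_le_of_lt hn1 hd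
  have hd0 : 0 < d := by linarith
  have hDn : (n : ℝ) < d ^ 2 := by
    have : Real.sqrt n ^ 2 < d ^ 2 := by
      apply sq_lt_sq' _ hd
      nlinarith [Real.sqrt_nonneg (n:ℝ)]
    rwa [Real.sq_sqrt (by positivity)] at this
  set D : ℝ := d ^ 2 with hDdef
  have hD1 : 1 < D := by nlinarith
  set t : ℝ := (D - n) / (2 * (n - 1)) with htdef
  have hn1' : (1:ℝ) ≤ (n:ℝ) - 1 := by
    have : (2:ℝ) ≤ n := by exact_mod_cast hn
    linarith
  have ht0 : 0 < t := div_pos (by linarith) (by linarith)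
  have ht' : t * (2*((n:ℝ)-1)) = D - n := by
    rw [htdef, div_mul_cancel₀ _ (by positivity : 2*((n:ℝ)-1) ≠ 0)]
  have htD : t < D - 1 := by nlinarith [mul_le_mul_of_nonneg_left hn1' ht0.le]
  set A2 : ℝ := 1 + t with hA2def
  set B2 : ℝ := (D - A2) / (D - 1) with hB2def
  have hA21 : 1 < A2 := by linarith
  have hA2D : A2 < D := by linarith
  have hB2pos : 0 < B2 := div_pos (by linarith) (by linarith)
  have hB2lt : B2 < 1 := by
    rw [hB2def, div_lt_one (by linarith)]; linarith
  have hB2eq : B2 * (D - 1) = D - A2 := by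
    rw [hB2def, div_mul_cancel₀ _ (by linarith : D - 1 ≠ 0)]
  -- determinant gain
  have hgain : 1 < A2 * B2 ^ (n - 1) := by
    have hber : 1 - ((n - 1 : ℕ) : ℝ) * (t / (D-1)) ≤ (1 - t/(D-1)) ^ (n-1) := by
      have := one_add_mul_le_pow (a := -(t/(D-1))) (by
        have : t/(D-1) ≤ 1 := by
          rw [div_le_one (by linarith)]; linarith
        linarith) (n-1)
      simpa [sub_eq_add_neg] using this
    have hB2' : B2 = 1 - t/(D-1) := by
      rw [hB2def, hA2def, eq_sub_iff_add_eq, ← add_div,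
        show D - (1+t) + t = D - 1 by ring, div_self (by linarith : D - 1 ≠ 0)]
    have hcard : ((n - 1 : ℕ) : ℝ) = (n:ℝ) - 1 := by
      have h1 : 1 ≤ n := by omega
      push_cast [h1]; ring
    rw [hcard] at hber
    have hmain : 1 < (1 + t) * (1 - ((n:ℝ)-1) * (t/(D-1))) := by
      have h2 : (0:ℝ) < D - 1 := by linarith
      have hx : 1 - ((n:ℝ)-1) * (t/(D-1)) = ((D-1) - ((n:ℝ)-1)*t)/(D-1) := by
        field_simp
      rw [hx, ← mul_div_assoc, lt_div_iff₀ h2, one_mul]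
      nlinarith [mul_pos ht0 (show (0:ℝ) < D - (n:ℝ) by linarith)]
    calc (1:ℝ) < (1 + t) * (1 - ((n:ℝ)-1) * (t/(D-1))) := hmain
      _ ≤ (1 + t) * (1 - t/(D-1)) ^ (n-1) := mul_le_mul_of_nonneg_left hber (by linarith)
      _ = A2 * B2 ^ (n-1) := by rw [hA2def, hB2']
  -- the semiaxes
  obtain ⟨a, ha2, ha0⟩ : ∃ a : ℝ, a ^ 2 = A2 ∧ 0 < a :=
    ⟨Real.sqrt A2, Real.sq_sqrt (by linarith), Real.sqrt_pos.2 (by linarith)⟩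
  obtain ⟨b, hb2, hb0⟩ : ∃ b : ℝ, b ^ 2 = B2 ∧ 0 < b :=
    ⟨Real.sqrt B2, Real.sq_sqrt (by linarith), Real.sqrt_pos.2 hB2pos⟩
  have ha1 : 1 < a := one_lt_of_sq ha0 (by rw [ha2]; exact hA21)
  have hb1 : b ≤ 1 := le_of_sq_le_sq'' hb0.le zero_le_one (by rw [hb2, one_pow]; linarith)
  have had : a < d := lt_of_sq_lt_sq'' ha0.le hd0 (by rw [ha2]; exact hDdef ▸ hA2D)
  have hdet1 : 1 < a * b ^ (n-1) := by
    apply one_lt_of_sq (mul_pos ha0 (pow_pos hb0 (n-1)))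
    calc (1:ℝ) < A2 * B2 ^ (n-1) := hgain
      _ = (a * b^(n-1))^2 := by
          rw [mul_pow, ← pow_mul, mul_comm (n-1) 2, pow_mul, ha2, hb2]
  -- the direction e
  obtain ⟨e, he, hye⟩ : ∃ e : Euc n, ‖e‖ = 1 ∧ y = d • e := by
    refine ⟨d⁻¹ • y, ?_, ?_⟩
    · rw [norm_smul, norm_inv, Real.norm_eq_abs, abs_of_pos hd0, ← hdef,
        inv_mul_cancel₀ (by linarith)]
    · rw [smul_smul, mul_inv_cancel₀ (by linarith), one_smul]
  have hee : (inner ℝ e e : ℝ) = 1 := by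
    rw [real_inner_self_eq_norm_sq, he]; norm_num
  -- the linear map
  set P : Euc n →ₗ[ℝ] Euc n := ((innerSL ℝ e).toLinearMap).smulRight e with hPdef
  set T : Euc n →ₗ[ℝ] Euc n := b • LinearMap.id + (a - b) • P with hTdef
  have hTapp : ∀ x, T x = b • x + (a - b) • (((inner ℝ e x : ℝ)) • e) := by
    intro x
    rw [hTdef]
    simp only [LinearMap.add_apply, LinearMap.smul_apply, LinearMap.id_coe, id_eq, hPdef,
      LinearMap.smulRight_apply, ContinuousLinearMap.coe_coe, innerSL_apply_apply]
  refine ⟨T, ?_, ?_⟩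
  · -- containment
    intro z hz
    set s : ℝ := (inner ℝ e z : ℝ) with hsdef
    have hs1 : |s| ≤ 1 := by
      calc |s| ≤ ‖e‖ * ‖z‖ := abs_real_inner_le_norm e z
        _ ≤ 1 := by rw [he, one_mul]; exact hz
    obtain ⟨v, hev, hzv⟩ : ∃ v : Euc n, (inner ℝ e v : ℝ) = 0 ∧ z = s • e + v := by
      refine ⟨z - s • e, ?_, by abel⟩
      rw [inner_sub_right, real_inner_smul_right, hee]
      simp [hsdef]
    have hv2 : ‖v‖^2 ≤ 1 - s^2 := by
      have h1 : ‖z‖^2 = s^2 + 1^2 * ‖v‖^2 := by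
        conv_lhs => rw [hzv, show v = (1:ℝ) • v from (one_smul ℝ v).symm]
        exact norm_combo he hev s 1
      have hz2 : ‖z‖^2 ≤ 1 := sq_le_one_of (norm_nonneg z) hz
      linarith only [h1, hz2]
    have hTz : T z = (a * s) • e + b • v := by
      rw [hTapp z, ← hsdef, show z = s • e + v from hzv, smul_add, smul_smul, smul_smul,
        show a * s = b * s + (a - b) * s by ring, add_smul]
      abel
    have hnorm2 : ∀ c₁ c₂ : ℝ, ‖c₁ • e + c₂ • v‖^2 = c₁^2 + c₂^2 * ‖v‖^2 :=
      norm_combo he hev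
    by_cases hcase : a * d * |s| ≤ 1
    · -- small s: T z is in the unit ball
      apply hB
      rw [Metric.mem_closedBall, dist_zero_right]
      have h2 : ‖T z‖^2 ≤ 1 := by
        rw [hTz, hnorm2]
        have hsq : A2 * D * (s^2) ≤ 1 := by
          have h3 : (a * d * |s|)^2 ≤ 1 :=
            sq_le_one_of (mul_nonneg (mul_nonneg ha0.le hd0.le) (abs_nonneg s)) hcase
          calc A2 * D * (s^2) = (a * d * |s|)^2 := by
                rw [← ha2, hDdef, mul_pow, mul_pow, sq_abs]
            _ ≤ 1 := h3
        have := case1_ineq hA21 hD1 hB2eq hB2pos (sq_nonneg s) hsq (sq_nonneg ‖v‖) hv2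
        calc (a*s)^2 + b^2 * ‖v‖^2 = A2 * s^2 + B2 * ‖v‖^2 := by
              rw [mul_pow, ha2, hb2]
          _ ≤ 1 := this
      have := le_of_sq_le_sq'' (norm_nonneg (T z)) zero_le_one (by rwa [one_pow])
      simpa using this
    · -- large s: convex combination with ±y
      push_neg at hcase
      obtain ⟨lam, hlamEq, hlam0, hlam1⟩ :
          ∃ lam : ℝ, lam * (D - 1) = a * d * |s| - 1 ∧ 0 < lam ∧ lam < 1 := by
        refine ⟨(a * d * |s| - 1) / (D - 1),
          div_mul_cancel₀ _ (by linarith : D - 1 ≠ 0),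
          div_pos (by linarith) (by linarith), ?_⟩
        rw [div_lt_one (by linarith)]
        have := lam_lt_aux ha1 had (abs_nonneg s) hs1
        rw [hDdef]; linarith
      obtain ⟨σ, hσs, hσ2, hσy⟩ : ∃ σ : ℝ, σ * |s| = s ∧ σ ^ 2 = 1 ∧ σ • y ∈ K := by
        by_cases h : 0 ≤ s
        · exact ⟨1, by rw [one_mul, abs_of_nonneg h], by norm_num, by simpa using hy⟩
        · exact ⟨-1, by rw [abs_of_neg (lt_of_not_ge h)]; ring, by norm_num,
            by simpa using hy'⟩
      have hkey : ‖T z - lam • (σ • y)‖^2 ≤ (1 - lam)^2 := by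
        have hTzl : T z - lam • (σ • y) = (a * s - lam * σ * d) • e + b • v := by
          rw [hTz, hye, smul_smul, smul_smul, sub_smul]
          abel
        rw [hTzl, hnorm2]
        have hss : (a * s - lam * σ * d)^2 = (a * |s| - lam * d)^2 := by
          have h7 : a * s - lam * σ * d = σ * (a * |s| - lam * d) := by
            linear_combination (-a) * hσs
          rw [h7, mul_pow, hσ2, one_mul]
        rw [hss, hb2]
        have hlamEq' : lam * (d^2 - 1) = a * d * |s| - 1 := by rw [← hDdef]; exact hlamEq
        have hB2eq' : B2 * (d^2 - 1) = d^2 - a^2 := by rw [← hDdef, ha2]; exact hB2eq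
        exact case2_ineq ha1 had (by rwa [sq_abs]) hB2pos hB2eq' hlamEq'
      have hkeyn : ‖T z - lam • (σ • y)‖ ≤ 1 - lam :=
        le_of_sq_le_sq'' (norm_nonneg _) (by linarith) hkey
      set w₂ : Euc n := (1 - lam)⁻¹ • (T z - lam • (σ • y)) with hw₂def
      have hw₂K : w₂ ∈ K := by
        apply hB
        rw [Metric.mem_closedBall, dist_zero_right, hw₂def, norm_smul, Real.norm_eq_abs,
          abs_of_pos (inv_pos.2 (by linarith : (0:ℝ) < 1 - lam))]
        rw [inv_mul_le_iff₀ (by linarith), mul_one]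
        exact hkeyn
      have hfin : T z = lam • (σ • y) + (1 - lam) • w₂ := by
        rw [hw₂def, smul_inv_smul₀ (by linarith : (1:ℝ) - lam ≠ 0)]
        abel
      rw [hfin]
      exact hK hσy hw₂K hlam0.le (by linarith) (by ring)
  · -- determinant
    have hcard : Module.finrank ℝ (Euc n) = Fintype.card (Fin n) := by
      simp [finrank_euclideanSpace_fin]
    set i0 : Fin n := ⟨0, by omega⟩ with hi0def
    have horth : Orthonormal ℝ (Set.restrict {i0} (fun _ : Fin n => e)) := by
      constructor
      · intro i; exact he
      · intro i j hij
        exact absurd (Subtype.ext ((i.2 : ↑i ∈ ({i0} : Set (Fin n))).trans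
          ((j.2 : ↑j ∈ ({i0} : Set (Fin n))).symm))) hij
    obtain ⟨β, hβ⟩ := horth.exists_orthonormalBasis_extension_of_card_eq hcard
    have hβ0 : β i0 = e := hβ i0 rfl
    have hTβ : ∀ j, T (β j) = (if j = i0 then a else b) • β j := by
      intro j
      by_cases hj : j = i0
      · subst hj
        rw [hβ0, if_pos rfl, hTapp, hee]
        module
      · rw [hTapp, if_neg hj]
        have : (inner ℝ e (β j) : ℝ) = 0 := by
          rw [← hβ0]
          exact β.orthonormal.2 (fun h => hj h.symm)
        rw [this]
        module
    have hmat : LinearMap.toMatrix β.toBasis β.toBasis T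
        = Matrix.diagonal (fun j => if j = i0 then a else b) := by
      ext i j
      rw [LinearMap.toMatrix_apply, OrthonormalBasis.coe_toBasis, hTβ j,
        ← OrthonormalBasis.coe_toBasis β, _root_.map_smul, Module.Basis.repr_self,
        Finsupp.smul_apply, Finsupp.single_apply]
      by_cases hij : i = j
      · subst hij
        rw [Matrix.diagonal_apply_eq, if_pos rfl, smul_eq_mul, mul_one]
      · rw [Matrix.diagonal_apply_ne _ hij, if_neg (Ne.symm hij), smul_zero]
    have hdetT : LinearMap.det T = a * b^(n-1) := by
      rw [← LinearMap.det_toMatrix β.toBasis, hmat, Matrix.det_diagonal]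
      rw [← Finset.mul_prod_erase Finset.univ _ (Finset.mem_univ i0), if_pos rfl]
      congr 1
      rw [Finset.prod_congr rfl (fun j hj => if_neg (Finset.ne_of_mem_erase hj)),
        Finset.prod_const, Finset.card_erase_of_mem (Finset.mem_univ i0),
        Finset.card_univ, Fintype.card_fin]
    rw [hdetT, abs_of_pos (mul_pos ha0 (pow_pos hb0 _))]
    exact hdet1

theorem johnSymmetric {n : ℕ} (hn : 2 ≤ n) (K : Set (Euc n)) (hK : Convex ℝ K)
    (hKc : IsCompact K) (hsym : ∀ x ∈ K, -x ∈ K) (h0 : 0 ∈ interior K) :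
    ∃ T : Euc n ≃ₗ[ℝ] Euc n, (⇑T '' Metric.closedBall 0 1 ⊆ K) ∧
      ∀ x ∈ K, ‖T.symm x‖ ≤ Real.sqrt n := by
  -- a small ball inside K
  obtain ⟨ε₀, hε₀, hball⟩ := Metric.mem_nhds_iff.1 (mem_interior_iff_mem_nhds.1 h0)
  set ε : ℝ := ε₀ / 2 with hεdef
  have hε : 0 < ε := by positivity
  have hεK : Metric.closedBall (0 : Euc n) ε ⊆ K :=
    (Metric.closedBall_subset_ball (by linarith)).trans hball
  -- K inside a big ball
  obtain ⟨R₀, hR₀⟩ := hKc.isBounded.subset_closedBall 0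
  set R : ℝ := max R₀ 1 with hRdef
  have hR1 : (0:ℝ) < R := lt_of_lt_of_le one_pos (le_max_right _ _)
  have hRK : K ⊆ Metric.closedBall 0 R :=
    hR₀.trans (Metric.closedBall_subset_closedBall (le_max_left _ _))
  -- the admissible set of operators
  set A : Set (Euc n →L[ℝ] Euc n) :=
    {W | ∀ z ∈ Metric.closedBall (0:Euc n) 1, W z ∈ K} with hAdef
  have hAclosed : IsClosed A := by
    have : A = ⋂ z ∈ Metric.closedBall (0:Euc n) 1,
        (fun W : Euc n →L[ℝ] Euc n => W z) ⁻¹' K := by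
      ext W; simp [hAdef]
    rw [this]
    exact isClosed_biInter fun z _ =>
      hKc.isClosed.preimage (ContinuousLinearMap.apply ℝ (Euc n) z).continuous
  have hAbounded : IsBounded A := by
    rw [Metric.isBounded_iff_subset_closedBall 0]
    refine ⟨R, fun W hW => ?_⟩
    rw [Metric.mem_closedBall, dist_zero_right]
    refine ContinuousLinearMap.opNorm_le_bound W hR1.le (fun x => ?_)
    rcases eq_or_ne x 0 with rfl | hx
    · simp
    · have hxn : 0 < ‖x‖ := norm_pos_iff.2 hx
      have h1 : W (‖x‖⁻¹ • x) ∈ K := hW _ (by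
        rw [Metric.mem_closedBall, dist_zero_right, norm_smul, norm_inv, norm_norm,
          inv_mul_cancel₀ hxn.ne'])
      have h2 : ‖W (‖x‖⁻¹ • x)‖ ≤ R := by
        have := hRK h1
        rwa [Metric.mem_closedBall, dist_zero_right] at this
      rw [_root_.map_smul, norm_smul, norm_inv, norm_norm] at h2
      rw [inv_mul_le_iff₀ hxn] at h2
      linarith [h2]
  have hAcompact : IsCompact A := Metric.isCompact_of_isClosed_isBounded hAclosed hAbounded
  -- the determinant function is continuous
  set bE : Module.Basis (Fin n) ℝ (Euc n) :=
    (Pi.basisFun ℝ (Fin n)).map (EuclideanSpace.equiv (Fin n) ℝ).symm.toLinearEquiv with hbE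
  have hdetcont : Continuous (fun W : Euc n →L[ℝ] Euc n =>
      |LinearMap.det (W : Euc n →ₗ[ℝ] Euc n)|) := by
    have h1 : Continuous fun W : Euc n →L[ℝ] Euc n =>
        LinearMap.toMatrix bE bE (W : Euc n →ₗ[ℝ] Euc n) :=
      LinearMap.continuous_of_finiteDimensional
        (f := (LinearMap.toMatrix bE bE).toLinearMap.comp (ContinuousLinearMap.coeLM ℝ))
    have h2 := h1.matrix_det
    simp only [LinearMap.det_toMatrix] at h2
    exact h2.abs
  -- the identity witness
  have hW₀ : (ε • ContinuousLinearMap.id ℝ (Euc n)) ∈ A := by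
    intro z hz
    rw [Metric.mem_closedBall, dist_zero_right] at hz
    apply hεK
    rw [Metric.mem_closedBall, dist_zero_right, ContinuousLinearMap.smul_apply,
      ContinuousLinearMap.id_apply, norm_smul, Real.norm_eq_abs, abs_of_pos hε]
    nlinarith
  obtain ⟨W, hWA, hWmax⟩ := hAcompact.exists_isMaxOn ⟨_, hW₀⟩ hdetcont.continuousOn
  -- the maximizer has positive determinant
  have hdetW : 0 < |LinearMap.det (W : Euc n →ₗ[ℝ] Euc n)| := by
    have h1 : (ε:ℝ)^(Module.finrank ℝ (Euc n)) ≤ |LinearMap.det (W : Euc n →ₗ[ℝ] Euc n)| := by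
      have h2 := hWmax hW₀
      simp only [mem_setOf_eq] at h2
      have h3 : ((ε • ContinuousLinearMap.id ℝ (Euc n) : Euc n →L[ℝ] Euc n) :
          Euc n →ₗ[ℝ] Euc n) = ε • LinearMap.id := by
        ext x; simp
      simp only [h3, LinearMap.det_smul, LinearMap.det_id, mul_one] at h2
      calc (ε:ℝ)^(Module.finrank ℝ (Euc n)) = |ε ^ Module.finrank ℝ (Euc n)| := by
            rw [abs_of_pos (pow_pos hε _)]
        _ ≤ _ := h2
    exact lt_of_lt_of_le (pow_pos hε _) h1
  have hdetne : LinearMap.det (W : Euc n →ₗ[ℝ] Euc n) ≠ 0 := by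
    intro h; rw [h] at hdetW; simp at hdetW
  set Te : Euc n ≃ₗ[ℝ] Euc n := LinearMap.equivOfDetNeZero _ hdetne with hTe
  have hTeapp : ∀ x, Te x = W x := fun x => rfl
  refine ⟨Te, ?_, ?_⟩
  · intro x ⟨z, hz, hzx⟩
    rw [← hzx, hTeapp]
    exact hWA z hz
  · -- the key maximality argument
    intro x hxK
    by_contra hcon
    push_neg at hcon
    set K' : Set (Euc n) := ⇑Te.symm '' K with hK'def
    have hK' : Convex ℝ K' := hK.linear_image Te.symm.toLinearMap
    have hB' : Metric.closedBall (0:Euc n) 1 ⊆ K' := by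
      intro z hz
      refine ⟨W z, hWA z hz, ?_⟩
      rw [← hTeapp]
      exact Te.symm_apply_apply z
    have hyK' : Te.symm x ∈ K' := ⟨x, hxK, rfl⟩
    have hy'K' : -(Te.symm x) ∈ K' := ⟨-x, hsym x hxK, by rw [map_neg]⟩
    obtain ⟨T₁, hT₁K, hT₁det⟩ := improve hn K' hK' hB' hyK' hy'K' hcon
    set W₁ : Euc n →L[ℝ] Euc n := W.comp (LinearMap.toContinuousLinearMap T₁) with hW₁
    have hW₁A : W₁ ∈ A := by
      intro z hz
      rw [Metric.mem_closedBall, dist_zero_right] at hz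
      have h1 : T₁ z ∈ K' := hT₁K z hz
      obtain ⟨k, hk, hkeq⟩ := h1
      have h2 : W₁ z = k := by
        rw [hW₁, ContinuousLinearMap.comp_apply, LinearMap.coe_toContinuousLinearMap',
          ← hkeq, ← hTeapp, Te.apply_symm_apply]
      rw [h2]; exact hk
    have hdet₁ : |LinearMap.det (W₁ : Euc n →ₗ[ℝ] Euc n)|
        = |LinearMap.det (W : Euc n →ₗ[ℝ] Euc n)| * |LinearMap.det T₁| := by
      have h3 : (W₁ : Euc n →ₗ[ℝ] Euc n) = (W : Euc n →ₗ[ℝ] Euc n).comp T₁ := by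
        ext x
        simp [hW₁, LinearMap.coe_toContinuousLinearMap']
      rw [h3, LinearMap.det_comp, abs_mul]
    have hgt : |LinearMap.det (W : Euc n →ₗ[ℝ] Euc n)|
        < |LinearMap.det (W₁ : Euc n →ₗ[ℝ] Euc n)| := by
      rw [hdet₁]
      nlinarith
    exact absurd (hWmax hW₁A) (by simp only [mem_setOf_eq]; linarith)

lemma wMeas_mono {n : ℕ} (u : Euc n → ℝ) {A B : Set (Euc n)} (h : A ⊆ B) :
    wMeas u A ≤ wMeas u B :=
  lintegral_mono_set h

theorem stmt6 (n : ℕ) (hn : 2 ≤ n) (p q : ℝ) (hp : 1 < p) (hq : 1 < q)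
    (u v : Euc n → ℝ) (hu : IsWeight u) (hv : IsWeight v)
    (hvpos : ∀ᵐ x ∂(volume : Measure (Euc n)), 0 < v x)
    (hyp : ∃ C : ℝ, 0 < C ∧ ∀ S : Set (Euc n), IsEllipsoid0 S →
      wMeas u (polarSet S) ^ (1/q) * wMeas (wFun p v) (Real.sqrt n • S) ^ (1 / rconj p)
          ≤ ENNReal.ofReal C ∧
      wMeas u (Real.sqrt n • S) ^ (1/q) * wMeas (wFun p v) (polarSet S) ^ (1 / rconj p)
          ≤ ENNReal.ofReal C) :
    ∃ C' : ℝ, 0 < C' ∧ ∀ E : Set (Euc n), IsBounded E → MeasurableSet E →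
      (interior E).Nonempty → (0 : Euc n) ∈ E →
      wMeas u (polarSet E) ^ (1/q) * wMeas (wFun p v) E ^ (1 / rconj p)
          ≤ ENNReal.ofReal C' ∧
      wMeas u E ^ (1/q) * wMeas (wFun p v) (polarSet E) ^ (1 / rconj p)
          ≤ ENNReal.ofReal C' := by
  obtain ⟨C, hC, hS⟩ := hyp
  refine ⟨C, hC, fun E hEb hEm hEint hE0 => ?_⟩
  -- the symmetric convex body generated by E
  set K : Set (Euc n) := closure (convexHull ℝ (E ∪ -E)) with hKdef
  have hKconv : Convex ℝ K := (convex_convexHull ℝ _).closure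
  have hEK : E ⊆ K :=
    (subset_union_left.trans (subset_convexHull ℝ _)).trans subset_closure
  have hKb : IsBounded K := by
    apply IsBounded.closure
    rw [isBounded_convexHull]
    refine hEb.union ?_
    obtain ⟨r, hr⟩ := hEb.subset_closedBall 0
    rw [Metric.isBounded_iff_subset_closedBall 0]
    refine ⟨r, fun x hx => ?_⟩
    have : -x ∈ E := Set.mem_neg.1 hx
    have h2 := hr this
    rw [Metric.mem_closedBall, dist_zero_right] at h2 ⊢
    rwa [← norm_neg]
  have hKc : IsCompact K :=
    Metric.isCompact_of_isClosed_isBounded isClosed_closure hKb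
  have hsym : ∀ x ∈ K, -x ∈ K := by
    have h1 : -(E ∪ -E) = E ∪ -E := by
      ext w
      simp only [Set.mem_neg, Set.mem_union, neg_neg]
      tauto
    have h3 : -K = K := by
      rw [hKdef, neg_closure, ← convexHull_neg, h1]
    intro x hx
    have h2 : -x ∈ -K := Set.neg_mem_neg.2 hx
    rwa [h3] at h2
  have h0K : 0 ∈ interior K := by
    obtain ⟨x₀, hx₀⟩ := hEint
    obtain ⟨r, hr0, hball⟩ := Metric.isOpen_iff.1 isOpen_interior x₀ hx₀
    have hballE : Metric.ball x₀ r ⊆ E := hball.trans interior_subset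
    have hball0 : Metric.ball (0 : Euc n) r ⊆ convexHull ℝ (E ∪ -E) := by
      intro z hz
      rw [Metric.mem_ball, dist_zero_right] at hz
      have h1 : x₀ + z ∈ E := hballE (by
        rw [Metric.mem_ball, dist_eq_norm]; simpa using hz)
      have h2 : z - x₀ ∈ -E := by
        rw [Set.mem_neg, neg_sub]
        exact hballE (by rw [Metric.mem_ball, dist_eq_norm]; simpa using hz)
      have h3 : x₀ + z ∈ convexHull ℝ (E ∪ -E) :=
        subset_convexHull ℝ _ (Or.inl h1)
      have h4 : z - x₀ ∈ convexHull ℝ (E ∪ -E) :=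
        subset_convexHull ℝ _ (Or.inr h2)
      have h5 := (convex_convexHull ℝ (E ∪ -E)) h3 h4
        (by norm_num : (0:ℝ) ≤ 1/2) (by norm_num : (0:ℝ) ≤ 1/2) (by norm_num)
      have h6 : (1/2 : ℝ) • (x₀ + z) + (1/2 : ℝ) • (z - x₀) = z := by
        rw [smul_add, smul_sub]
        module
      rwa [h6] at h5
    have h7 : Metric.ball (0:Euc n) r ⊆ K := hball0.trans subset_closure
    exact interior_maximal h7 Metric.isOpen_ball (Metric.mem_ball_self hr0)
  obtain ⟨T, hTK, hTn⟩ := johnSymmetric hn K hKconv hKc hsym h0K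
  set S : Set (Euc n) := ⇑T '' Metric.closedBall 0 1 with hSdef
  have hsqrtn : (0:ℝ) < Real.sqrt n := Real.sqrt_pos.2 (by positivity)
  -- E ⊆ √n • S
  have hEsub : E ⊆ Real.sqrt n • S := by
    intro x hx
    have hxK : x ∈ K := hEK hx
    have h1 : ‖T.symm x‖ ≤ Real.sqrt n := hTn x hxK
    rw [Set.mem_smul_set]
    refine ⟨T ((Real.sqrt n)⁻¹ • T.symm x), ⟨(Real.sqrt n)⁻¹ • T.symm x, ?_, rfl⟩, ?_⟩
    · rw [Metric.mem_closedBall, dist_zero_right, norm_smul, norm_inv, Real.norm_eq_abs,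
        abs_of_pos hsqrtn, inv_mul_le_iff₀ hsqrtn, mul_one]
      exact h1
    · rw [_root_.map_smul, T.apply_symm_apply, smul_inv_smul₀ hsqrtn.ne']
  -- polarSet E ⊆ polarSet S
  have hpolar : polarSet E ⊆ polarSet S := by
    intro z hz
    intro x hxS
    have hxK : x ∈ K := hTK hxS
    -- the set of points with |⟨·,z⟩| ≤ 1 is closed convex and contains E ∪ -E
    have hCz : K ⊆ {x : Euc n | |(inner ℝ x z : ℝ)| ≤ 1} := by
      apply closure_minimal
      · apply convexHull_min
        · rintro w (hw | hw)
          · exact hz w hw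
          · have h2 : -w ∈ E := Set.mem_neg.1 hw
            have := hz _ h2
            rwa [inner_neg_left, abs_neg] at this
        · intro x₁ h₁ x₂ h₂ a b ha hb hab
          simp only [mem_setOf_eq] at h₁ h₂ ⊢
          calc |(inner ℝ (a • x₁ + b • x₂) z : ℝ)|
              = |a * (inner ℝ x₁ z : ℝ) + b * (inner ℝ x₂ z : ℝ)| := by
                rw [inner_add_left, real_inner_smul_left, real_inner_smul_left]
            _ ≤ a * |(inner ℝ x₁ z : ℝ)| + b * |(inner ℝ x₂ z : ℝ)| := by
                calc _ ≤ |a * (inner ℝ x₁ z : ℝ)| + |b * (inner ℝ x₂ z : ℝ)| := abs_add_le _ _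
                  _ = a * |(inner ℝ x₁ z : ℝ)| + b * |(inner ℝ x₂ z : ℝ)| := by
                      rw [abs_mul, abs_mul, abs_of_nonneg ha, abs_of_nonneg hb]
            _ ≤ a * 1 + b * 1 := by
                gcongr
            _ = 1 := by linarith
      · have hcont : Continuous fun x : Euc n => |(inner ℝ x z : ℝ)| :=
          (continuous_id.inner continuous_const).abs
        exact isClosed_le hcont continuous_const
    exact hCz hxK
  -- exponents are nonnegative
  have hq0 : (0:ℝ) ≤ 1/q := by positivity
  have hrconj : 0 < rconj p := div_pos (by linarith) (by linarith)
  have hp'0 : (0:ℝ) ≤ 1 / rconj p := by positivity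
  obtain ⟨h1, h2⟩ := hS S ⟨T, rfl⟩
  constructor
  · calc wMeas u (polarSet E) ^ (1/q) * wMeas (wFun p v) E ^ (1 / rconj p)
        ≤ wMeas u (polarSet S) ^ (1/q) * wMeas (wFun p v) (Real.sqrt n • S) ^ (1 / rconj p) := by
          exact mul_le_mul' (ENNReal.rpow_le_rpow (wMeas_mono u hpolar) hq0)
            (ENNReal.rpow_le_rpow (wMeas_mono _ hEsub) hp'0)
      _ ≤ ENNReal.ofReal C := h1
  · calc wMeas u E ^ (1/q) * wMeas (wFun p v) (polarSet E) ^ (1 / rconj p)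
        ≤ wMeas u (Real.sqrt n • S) ^ (1/q) * wMeas (wFun p v) (polarSet S) ^ (1 / rconj p) := by
          exact mul_le_mul' (ENNReal.rpow_le_rpow (wMeas_mono u hEsub) hq0)
            (ENNReal.rpow_le_rpow (wMeas_mono _ hpolar) hp'0)
      _ ≤ ENNReal.ofReal C := h2
end
end
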